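/- Distinct extreme points μ, ν of 𝒢(γ) are mutually singular: there exists a tail event B ∈ ℱ_∞ with μ(B) = 1 and ν(B) = 0. More generally, each μ ∈ 𝒢(γ) is uniquely determined within 𝒢(γ) by its restriction to ℱ_∞. -/

import Mathlib

open MeasureTheory
open scoped ENNReal

/-- A specification: a family `γ = (γ_Λ)_{Λ finite}` of proper probability
kernels from `(Ω, ℱ_{Λᶜ})` to `(Ω, ℱ)` satisfying the consistency condition
`γ_Λ γ_{Λ'} = γ_Λ` for `Λ' ⊆ Λ`. -/
structure Specification (E S : Type*) [MeasurableSpace E] where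
  ker : Finset S → (S → E) → Measure (S → E)
  isProb : ∀ (Λ : Finset S) (ω : S → E), IsProbabilityMeasure (ker Λ ω)
  meas : ∀ (Λ : Finset S) (A : Set (S → E)), MeasurableSet A →
    Measurable[MeasureTheory.cylinderEvents ((↑Λ : Set S)ᶜ)] (fun ω => ker Λ ω A)
  proper : ∀ (Λ : Finset S) (ω : S → E) (B : Set (S → E)),
    MeasurableSet[MeasureTheory.cylinderEvents ((↑Λ : Set S)ᶜ)] B →
      ker Λ ω B = B.indicator (fun _ => (1 : ℝ≥0∞)) ω
  consistent : ∀ (Λ' Λ : Finset S), Λ' ⊆ Λ → ∀ (ω : S → E) (A : Set (S → E)),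
    MeasurableSet A → ∫⁻ ω', ker Λ' ω' A ∂(ker Λ ω) = ker Λ ω A

/-- `μ ∈ 𝒢(γ)`: the probability measure `μ` is consistent with (specified by)
the specification `γ`, i.e. `μ γ_Λ = μ` for all finite `Λ`. -/
def IsGibbsFor {E S : Type*} [MeasurableSpace E] (γ : Specification E S)
    (μ : Measure (S → E)) : Prop :=
  IsProbabilityMeasure μ ∧ ∀ (Λ : Finset S) (A : Set (S → E)), MeasurableSet A →
    ∫⁻ ω, γ.ker Λ ω A ∂μ = μ A

/-- The tail σ-algebra `ℱ_∞ = ⋂_{Λ finite} ℱ_{Λᶜ}`. -/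
def tailSigma (E S : Type*) [MeasurableSpace E] : MeasurableSpace (S → E) :=
  ⨅ Λ : Finset S, MeasureTheory.cylinderEvents ((↑Λ : Set S)ᶜ)

/-- `μ ∈ 𝒢(γ)` is an extreme point of `𝒢(γ)`. -/
def IsExtremeGibbs {E S : Type*} [MeasurableSpace E] (γ : Specification E S)
    (μ : MeasureTheory.Measure (S → E)) : Prop :=
  IsGibbsFor γ μ ∧ ∀ (ν ν' : MeasureTheory.Measure (S → E)) (α : ℝ≥0∞),
    IsGibbsFor γ ν → IsGibbsFor γ ν' → 0 < α → α < 1 →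
      μ = α • ν + (1 - α) • ν' → ν = μ ∧ ν' = μ

/-!
For `μ, ν ∈ 𝒢(γ)` put `ρ = μ + ν`. Properness of `γ_Λ` makes `γ_Λ f` a version of the
conditional expectation of `f` given `ℱ_{Λᶜ}` under any `γ`-invariant measure, so the density
`f = dμ/dρ` satisfies `γ_Λ f = f` `ρ`-a.e. for every finite `Λ`. Along an exhaustion `Λ_n ↑ S`,
`limsup γ_{Λ_n} f` is then a tail-measurable version of `f`, so `μ` is determined by its values on
`ℱ_∞`. If `μ` is extreme and `B` is a tail event with `0 < μ B < 1`, then `μ(· | B)` and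
`μ(· | Bᶜ)` lie in `𝒢(γ)` and split `μ` as a proper convex combination; hence extreme points are
trivial on `ℱ_∞`, and two distinct ones differ on a tail event, which is then null for one of them
and full for the other.
-/

open ProbabilityTheory Filter

section TailSigma

variable {E S : Type*} [MeasurableSpace E]

lemma tailSigma_le_cylinderEvents (Λ : Finset S) :
    tailSigma E S ≤ cylinderEvents (↑Λ : Set S)ᶜ :=
  iInf_le (fun Λ' : Finset S => cylinderEvents (↑Λ' : Set S)ᶜ) Λ

lemma tailSigma_le_pi : tailSigma E S ≤ MeasurableSpace.pi :=
  (tailSigma_le_cylinderEvents ∅).trans cylinderEvents_le_pi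

lemma measurable_tailSigma_iff {β : Type*} [MeasurableSpace β] {g : (S → E) → β} :
    Measurable[tailSigma E S] g ↔ ∀ Λ : Finset S, Measurable[cylinderEvents (↑Λ : Set S)ᶜ] g :=
  ⟨fun hg Λ => hg.mono (tailSigma_le_cylinderEvents Λ) le_rfl,
    fun hg _ hs => MeasurableSpace.measurableSet_iInf.2 fun Λ => hg Λ hs⟩

end TailSigma

namespace Specification

variable {E S : Type*} [MeasurableSpace E] (γ : Specification E S)

def kernel (Λ : Finset S) :
    Kernel[cylinderEvents (↑Λ : Set S)ᶜ, MeasurableSpace.pi] (S → E) (S → E) :=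
  @Kernel.mk _ _ (cylinderEvents _) _ (γ.ker Λ)
    (Measure.measurable_of_measurable_coe (mβ := cylinderEvents _) _ (γ.meas Λ))

lemma kernel_apply (Λ : Finset S) (ω : S → E) : γ.kernel Λ ω = γ.ker Λ ω := rfl

lemma measurable_ker (Λ : Finset S) : Measurable (γ.ker Λ) :=
  (γ.kernel Λ).measurable.mono cylinderEvents_le_pi le_rfl

lemma isProper_kernel (Λ : Finset S) : (γ.kernel Λ).IsProper := by
  refine Kernel.IsProper.of_inter_eq_indicator_mul cylinderEvents_le_pi fun A _ B hB ω => ?_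
  rw [kernel_apply]
  by_cases hω : ω ∈ B
  · have : γ.ker Λ ω Bᶜ = 0 := by simp [γ.proper Λ ω Bᶜ hB.compl, hω]
    simp [measure_inter_conull this, hω]
  · have : γ.ker Λ ω B = 0 := by simp [γ.proper Λ ω B hB, hω]
    simp [measure_inter_null_of_null_right A this, hω]

lemma lintegral_mul_ker (Λ : Finset S) {f g : (S → E) → ℝ≥0∞} (hf : Measurable f)
    (hg : Measurable[cylinderEvents (↑Λ : Set S)ᶜ] g) (ω : S → E) :
    ∫⁻ ω', g ω' * f ω' ∂γ.ker Λ ω = g ω * ∫⁻ ω', f ω' ∂γ.ker Λ ω :=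
  (γ.isProper_kernel Λ).lintegral_mul cylinderEvents_le_pi hf hg ω

lemma measurable_lintegral_ker (Λ : Finset S) {f : (S → E) → ℝ≥0∞} (hf : Measurable f) :
    Measurable[cylinderEvents (↑Λ : Set S)ᶜ] fun ω => ∫⁻ ω', f ω' ∂γ.ker Λ ω :=
  hf.lintegral_kernel (κ := γ.kernel Λ)

-- `IsGibbsFor` without the normalisation, so that it is stable under sums and restrictions.
def IsInvariant (ρ : Measure (S → E)) : Prop := ∀ Λ, ρ.bind (γ.ker Λ) = ρ

variable {γ}

lemma isInvariant_iff {ρ : Measure (S → E)} : γ.IsInvariant ρ ↔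
    ∀ (Λ : Finset S) (A : Set (S → E)), MeasurableSet A → ∫⁻ ω, γ.ker Λ ω A ∂ρ = ρ A := by
  refine forall_congr' fun Λ => ?_
  rw [Measure.ext_iff]
  refine forall₂_congr fun A hA => ?_
  rw [Measure.bind_apply hA (γ.measurable_ker Λ).aemeasurable]

lemma isGibbsFor_iff {μ : Measure (S → E)} :
    IsGibbsFor γ μ ↔ IsProbabilityMeasure μ ∧ γ.IsInvariant μ := by
  rw [isInvariant_iff]
  rfl

lemma IsInvariant.add {μ ν : Measure (S → E)} (hμ : γ.IsInvariant μ) (hν : γ.IsInvariant ν) :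
    γ.IsInvariant (μ + ν) := by
  rw [isInvariant_iff] at *
  intro Λ A hA
  rw [lintegral_add_measure, hμ Λ A hA, hν Λ A hA, Measure.add_apply]

lemma IsInvariant.smul {μ : Measure (S → E)} (hμ : γ.IsInvariant μ) (c : ℝ≥0∞) :
    γ.IsInvariant (c • μ) := fun Λ => by
  rw [Measure.bind_smul, hμ Λ]

lemma IsInvariant.restrict {μ : Measure (S → E)} (hμ : γ.IsInvariant μ) {B : Set (S → E)}
    (hB : MeasurableSet[tailSigma E S] B) : γ.IsInvariant (μ.restrict B) := fun Λ => by
  have hBΛ : MeasurableSet[cylinderEvents (↑Λ : Set S)ᶜ] B := tailSigma_le_cylinderEvents Λ B hB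
  ext A hA
  rw [Measure.bind_apply hA (γ.measurable_ker Λ).aemeasurable, Measure.restrict_apply hA]
  exact ((γ.isProper_kernel Λ).setLIntegral_eq_comp cylinderEvents_le_pi hA hBΛ).trans
    (congrArg (· (A ∩ B)) (hμ Λ))

lemma IsInvariant.lintegral_lintegral_ker {ρ : Measure (S → E)} (hρ : γ.IsInvariant ρ)
    (Λ : Finset S) {f : (S → E) → ℝ≥0∞} (hf : Measurable f) :
    ∫⁻ ω, ∫⁻ ω', f ω' ∂γ.ker Λ ω ∂ρ = ∫⁻ ω, f ω ∂ρ := by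
  conv_rhs => rw [← hρ Λ]
  exact (Measure.lintegral_bind (γ.measurable_ker Λ).aemeasurable hf.aemeasurable).symm

lemma IsInvariant.lintegral_mul_lintegral_ker {ρ : Measure (S → E)} (hρ : γ.IsInvariant ρ)
    {Λ : Finset S} {f g : (S → E) → ℝ≥0∞} (hg : Measurable[cylinderEvents (↑Λ : Set S)ᶜ] g)
    (hf : Measurable f) :
    ∫⁻ ω, g ω * ∫⁻ ω', f ω' ∂γ.ker Λ ω ∂ρ = ∫⁻ ω, g ω * f ω ∂ρ := by
  simp_rw [← γ.lintegral_mul_ker Λ hf hg]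
  exact hρ.lintegral_lintegral_ker Λ ((hg.mono cylinderEvents_le_pi le_rfl).mul hf)
lemma IsInvariant.lintegral_ker_rnDeriv_ae_eq {μ ρ : Measure (S → E)} [SigmaFinite μ]
    [SigmaFinite ρ] (hμ : γ.IsInvariant μ) (hρ : γ.IsInvariant ρ) (hμρ : μ ≪ ρ) (Λ : Finset S) :
    (fun ω => ∫⁻ ω', μ.rnDeriv ρ ω' ∂γ.ker Λ ω) =ᵐ[ρ] μ.rnDeriv ρ := by
  set f := μ.rnDeriv ρ
  have hf : Measurable f := Measure.measurable_rnDeriv μ ρ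
  set fΛ := fun ω => ∫⁻ ω', f ω' ∂γ.ker Λ ω
  have hfΛ : Measurable[cylinderEvents (↑Λ : Set S)ᶜ] fΛ := γ.measurable_lintegral_ker Λ hf
  suffices hμ_eq : ρ.withDensity fΛ = μ by
    have := Measure.rnDeriv_withDensity ρ (hfΛ.mono cylinderEvents_le_pi le_rfl)
    rw [hμ_eq] at this
    exact this.symm
  ext A hA
  have hγA : Measurable[cylinderEvents (↑Λ : Set S)ᶜ] fun ω => γ.ker Λ ω A := γ.meas Λ A hA
  have hA1 : Measurable (A.indicator (1 : (S → E) → ℝ≥0∞)) := measurable_one.indicator hA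
  calc ρ.withDensity fΛ A = ∫⁻ ω, fΛ ω * A.indicator 1 ω ∂ρ := by
        rw [withDensity_apply _ hA, ← lintegral_indicator hA]
        refine lintegral_congr fun ω => ?_
        by_cases hω : ω ∈ A <;> simp [hω]
    _ = ∫⁻ ω, fΛ ω * ∫⁻ ω', A.indicator 1 ω' ∂γ.ker Λ ω ∂ρ :=
        (hρ.lintegral_mul_lintegral_ker hfΛ hA1).symm
    _ = ∫⁻ ω, γ.ker Λ ω A * fΛ ω ∂ρ := by simp_rw [lintegral_indicator_one hA, mul_comm]
    _ = ∫⁻ ω, γ.ker Λ ω A * f ω ∂ρ := hρ.lintegral_mul_lintegral_ker hγA hf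
    _ = ∫⁻ ω, γ.ker Λ ω A ∂(ρ.withDensity f) := by
        rw [lintegral_withDensity_eq_lintegral_mul _ hf (hγA.mono cylinderEvents_le_pi le_rfl)]
        simp only [Pi.mul_apply, mul_comm]
    _ = ∫⁻ ω, γ.ker Λ ω A ∂μ := by rw [Measure.withDensity_rnDeriv_eq μ ρ hμρ]
    _ = μ A := isInvariant_iff.1 hμ Λ A hA

lemma exists_measurable_tailSigma_ae_eq [Countable S] {ρ : Measure (S → E)}
    {f : (S → E) → ℝ≥0∞} (hf : Measurable f)
    (hfix : ∀ Λ : Finset S, (fun ω => ∫⁻ ω', f ω' ∂γ.ker Λ ω) =ᵐ[ρ] f) :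
    ∃ g : (S → E) → ℝ≥0∞, Measurable[tailSigma E S] g ∧ g =ᵐ[ρ] f := by
  -- `limsup` along an exhaustion `u n ↑ S` ignores finitely many terms, hence is
  -- `ℱ_{Λᶜ}`-measurable for every `Λ`.
  obtain ⟨u, hu⟩ := (atTop : Filter (Finset S)).exists_seq_tendsto
  refine ⟨fun ω => limsup (fun n => ∫⁻ ω', f ω' ∂γ.ker (u n) ω) atTop, ?_, ?_⟩
  · refine measurable_tailSigma_iff.2 fun Λ => ?_
    obtain ⟨N, hN⟩ := eventually_atTop.1 (tendsto_atTop.1 hu Λ)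
    rw [show (fun ω => limsup (fun n => ∫⁻ ω', f ω' ∂γ.ker (u n) ω) atTop) =
        fun ω => limsup (fun n => ∫⁻ ω', f ω' ∂γ.ker (u (n + N)) ω) atTop from
      funext fun ω => (limsup_nat_add _ N).symm]
    exact Measurable.limsup fun n => (γ.measurable_lintegral_ker _ hf).mono
      (cylinderEvents_mono (Set.compl_subset_compl.2 (hN (n + N) le_add_self))) le_rfl
  · filter_upwards [ae_all_iff.2 fun n => hfix (u n)] with ω hω
    simp_rw [hω, limsup_const]

lemma IsInvariant.exists_measurable_tailSigma_withDensity_eq [Countable S]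
    {μ ρ : Measure (S → E)} [SigmaFinite μ] [SigmaFinite ρ] (hμ : γ.IsInvariant μ)
    (hρ : γ.IsInvariant ρ) (hμρ : μ ≪ ρ) :
    ∃ g : (S → E) → ℝ≥0∞, Measurable[tailSigma E S] g ∧ ρ.withDensity g = μ := by
  obtain ⟨g, hg, hgf⟩ := exists_measurable_tailSigma_ae_eq (Measure.measurable_rnDeriv μ ρ)
    (hμ.lintegral_ker_rnDeriv_ae_eq hρ hμρ)
  exact ⟨g, hg, (withDensity_congr_ae hgf).trans (Measure.withDensity_rnDeriv_eq μ ρ hμρ)⟩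

theorem IsInvariant.ext_of_tailSigma [Countable S] {μ ν : Measure (S → E)} [IsFiniteMeasure μ]
    [IsFiniteMeasure ν] (hμ : γ.IsInvariant μ) (hν : γ.IsInvariant ν)
    (h : ∀ B, MeasurableSet[tailSigma E S] B → μ B = ν B) : μ = ν := by
  obtain ⟨g, hg, hgμ⟩ := hμ.exists_measurable_tailSigma_withDensity_eq (hμ.add hν)
    (Measure.AbsolutelyContinuous.rfl.add_right ν)
  obtain ⟨g', hg', hgν⟩ := hν.exists_measurable_tailSigma_withDensity_eq (hμ.add hν)
    (Measure.AbsolutelyContinuous.rfl.add_right' μ)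
  have hm : tailSigma E S ≤ MeasurableSpace.pi := tailSigma_le_pi
  have hgg' : g =ᵐ[(μ + ν).trim hm] g' :=
    ae_eq_of_forall_setLIntegral_eq_of_sigmaFinite hg hg' fun B hB _ => by
      rw [setLIntegral_trim hm hg hB, setLIntegral_trim hm hg' hB, ← withDensity_apply _ (hm B hB),
        ← withDensity_apply _ (hm B hB), hgμ, hgν, h B hB]
  calc μ = (μ + ν).withDensity g := hgμ.symm
    _ = (μ + ν).withDensity g' := withDensity_congr_ae (ae_eq_of_ae_eq_trim hgg')
    _ = ν := hgν

end Specification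

section Extreme

variable {E S : Type*} [MeasurableSpace E] {γ : Specification E S}

open Specification

lemma IsGibbsFor.ext_of_tailSigma [Countable S] {μ ν : Measure (S → E)} (hμ : IsGibbsFor γ μ)
    (hν : IsGibbsFor γ ν) (h : ∀ B, MeasurableSet[tailSigma E S] B → μ B = ν B) : μ = ν := by
  obtain ⟨_, hμ⟩ := isGibbsFor_iff.1 hμ
  obtain ⟨_, hν⟩ := isGibbsFor_iff.1 hν
  exact hμ.ext_of_tailSigma hν h

lemma IsGibbsFor.cond {μ : Measure (S → E)} (hμ : IsGibbsFor γ μ) {B : Set (S → E)}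
    (hB : MeasurableSet[tailSigma E S] B) (hB0 : μ B ≠ 0) : IsGibbsFor γ μ[|B] := by
  obtain ⟨_, hμ⟩ := isGibbsFor_iff.1 hμ
  exact isGibbsFor_iff.2 ⟨cond_isProbabilityMeasure hB0, (hμ.restrict hB).smul _⟩

lemma IsExtremeGibbs.measure_eq_zero_or_one {μ : Measure (S → E)} (hμ : IsExtremeGibbs γ μ)
    {B : Set (S → E)} (hB : MeasurableSet[tailSigma E S] B) : μ B = 0 ∨ μ B = 1 := by
  have := hμ.1.1
  by_contra! hB01
  obtain ⟨hB0, hB1⟩ := hB01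
  have hBm : MeasurableSet B := tailSigma_le_pi B hB
  have hBc0 : μ Bᶜ ≠ 0 := (prob_compl_eq_zero_iff hBm).not.2 hB1
  have hdecomp : μ = μ B • μ[|B] + (1 - μ B) • μ[|Bᶜ] := by
    ext A hA
    rw [← prob_compl_eq_one_sub hBm, Measure.add_apply, Measure.smul_apply, Measure.smul_apply,
      smul_eq_mul, smul_eq_mul, mul_comm, mul_comm (μ Bᶜ), cond_add_cond_compl_eq hBm]
  obtain ⟨hcond, -⟩ := hμ.2 _ _ _ (hμ.1.cond hB hB0) (hμ.1.cond hB.compl hBc0)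
    (pos_iff_ne_zero.2 hB0) (prob_le_one.lt_of_ne hB1) hdecomp
  exact hB1 (by rw [← hcond, cond_apply_self hB0 (measure_ne_top μ B)])

end Extreme

theorem extreme_mutually_singular_and_tail_determined_general
    {E S : Type*} [MeasurableSpace E] [Countable S]
    (γ : Specification E S) :
    (∀ μ ν : MeasureTheory.Measure (S → E), IsExtremeGibbs γ μ →
      IsExtremeGibbs γ ν → μ ≠ ν →
        ∃ B : Set (S → E), MeasurableSet[tailSigma E S] B ∧ μ B = 1 ∧ ν B = 0) ∧
    (∀ μ ν : MeasureTheory.Measure (S → E), IsGibbsFor γ μ → IsGibbsFor γ ν →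
      (∀ B : Set (S → E), MeasurableSet[tailSigma E S] B → μ B = ν B) → μ = ν) := by
  refine ⟨fun μ ν hμ hν hne => ?_, fun μ ν hμ hν => hμ.ext_of_tailSigma hν⟩
  obtain ⟨B, hB, hμν⟩ : ∃ B, MeasurableSet[tailSigma E S] B ∧ μ B ≠ ν B := by
    by_contra! h
    exact hne (hμ.1.ext_of_tailSigma hν.1 h)
  have := hμ.1.1
  have := hν.1.1
  have hBm : MeasurableSet B := tailSigma_le_pi B hB
  rcases hμ.measure_eq_zero_or_one hB with hμB | hμB <;>
    rcases hν.measure_eq_zero_or_one hB with hνB | hνB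
  · exact absurd (hμB.trans hνB.symm) hμν
  · exact ⟨Bᶜ, hB.compl, by rw [prob_compl_eq_one_sub hBm, hμB, tsub_zero],
      (prob_compl_eq_zero_iff hBm).2 hνB⟩
  · exact ⟨B, hB, hμB, hνB⟩
  · exact absurd (hμB.trans hνB.symm) hμν

/-- Distinct extreme points of `𝒢(γ)` are mutually singular: they are
separated by a tail event; more generally, every `μ ∈ 𝒢(γ)` is uniquely
determined within `𝒢(γ)` by its restriction to the tail σ-algebra. -/
theorem extreme_mutually_singular_and_tail_determined
    {E S : Type*} [Fintype E] [MeasurableSpace E] [Countable S]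
    (γ : Specification E S) :
    (∀ μ ν : MeasureTheory.Measure (S → E), IsExtremeGibbs γ μ →
      IsExtremeGibbs γ ν → μ ≠ ν →
        ∃ B : Set (S → E), MeasurableSet[tailSigma E S] B ∧ μ B = 1 ∧ ν B = 0) ∧
    (∀ μ ν : MeasureTheory.Measure (S → E), IsGibbsFor γ μ → IsGibbsFor γ ν →
      (∀ B : Set (S → E), MeasurableSet[tailSigma E S] B → μ B = ν B) → μ = ν) :=
  extreme_mutually_singular_and_tail_determined_general γ
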